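/- arXiv:2005.00168 — 2 statements merged into one kernel-verified Lean document; each statement's English description precedes it below -/
import Mathlib

section
/- Consider two bamboos with growth rates h_1 = 1-ε and h_2 = ε, where 0 < ε < 1/2. For any perpetual schedule in which bamboo 2 is cut at least once, the makespan is at least 2-2ε; consequently, if bamboo 2's height is to stay bounded, the makespan is at least 2-2ε. -/
/-- Two bamboos with growth rates `1 - ε` and `ε` (for `0 < ε < 1/2`), modeled with
after-cut heights `A d i` (bamboo `0` has rate `1 - ε`, bamboo `1` has rate `ε`):
if bamboo `1` is cut at least once, then any upper bound `M` on all heights just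
before the daily cut (i.e. the makespan) satisfies `M ≥ 2 - 2ε`. -/
theorem bgt_two_bamboos_makespan (ε : ℝ) (hε0 : 0 < ε) (hε : ε < 1 / 2)
    (h : Fin 2 → ℝ) (hh0 : h 0 = 1 - ε) (hh1 : h 1 = ε)
    (cut : ℕ → Option (Fin 2)) (A : ℕ → Fin 2 → ℝ)
    (hA0 : ∀ i, A 0 i = 0)
    (hAs : ∀ d i, A (d + 1) i = if cut (d + 1) = some i then 0 else A d i + h i)
    (hcut : ∃ d, cut (d + 1) = some 1)
    (M : ℝ) (hM : ∀ d i, A d i + h i ≤ M) :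
    2 - 2 * ε ≤ M := by
  have h0pos : (0:ℝ) ≤ h 0 := by rw [hh0]; linarith
  have hnonneg : ∀ d, 0 ≤ A d 0 := by
    intro d
    induction d with
    | zero => rw [hA0]
    | succ n ih =>
      rw [hAs]
      split
      · exact le_refl 0
      · linarith
  obtain ⟨d, hd⟩ := hcut
  have hne : cut (d + 1) ≠ some 0 := by
    rw [hd]; simp
  have h1 : A (d + 1) 0 = A d 0 + h 0 := by
    rw [hAs]; simp [hne]
  have h2 := hM (d + 1) 0
  have h3 := hnonneg d
  rw [h1, hh0] at h2
  linarith
end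

section
/- Consider a regular instance with n ≥ 2 bamboos: h_i = 2^{-i} for i < n and h_n = 2^{-(n-1)}. Define the schedule σ(D) for D ∈ ℕ as follows: σ(D) = i if the least significant 0 among the last n-1 bits of D is at position i-1 (1-indexed, i < n), and σ(D) = n if the n-1 least significant bits of D are all 1. Then under σ, every bamboo i < n is cut at least once in every window of 2^i consecutive days, bamboo n is cut at least once every 2^{n-1} days, and hence the makespan of σ is exactly 1. -/
/-- Position (0-indexed) of the least significant `0` bit in the binary representation. -/
noncomputable def leastZeroBit (D : ℕ) : ℕ :=
  Nat.find (⟨D, by simpa using Nat.testBit_lt_two_pow (Nat.lt_two_pow_self (n := D))⟩ :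
    ∃ i, D.testBit i = false)

/-- The binary-counter schedule for a regular instance with `n` bamboos: at day `D` cut
bamboo `i` if the least significant `0` among the last `n-1` bits of `D` is at position
`i - 1` (so `i < n`), and cut bamboo `n` if the `n-1` least significant bits are all `1`. -/
noncomputable def regSched (n D : ℕ) : ℕ := min (leastZeroBit D + 1) n

/-!
Bamboo `i ≤ n` is cut exactly on the days `d ≡ 2^(i-1) - 1 (mod 2^(min i (n-1)))`: for `i < n`
these are the days whose lowest `i` bits are `i - 1` ones below a zero, for `i = n` the days whose
lowest `n - 1` bits are all ones. A bamboo of growth rate `h` that is cut in every window of `p`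
days never exceeds `p * h`, which here is `2^(min i (n-1)) * 2^(-min i (n-1)) = 1`; and bamboo `n`,
not cut before day `2^(n-1) - 1`, has height exactly `2^(n-1) * 2^(-(n-1)) = 1` on that day.
-/

namespace Nat

theorem mod_two_pow_eq_iff_testBit {d x m : ℕ} (hx : x < 2 ^ m) :
    d % 2 ^ m = x ↔ ∀ j < m, d.testBit j = x.testBit j := by
  constructor
  · intro h j hj
    simpa [h, hj] using (testBit_mod_two_pow d m j).symm
  · intro h
    refine eq_of_testBit_eq fun j => ?_
    rw [testBit_mod_two_pow]
    by_cases hj : j < m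
    · simp [hj, h j hj]
    · simp [hj, testBit_lt_two_pow (hx.trans_le (pow_le_pow_right₀ one_le_two (not_lt.1 hj)))]

theorem mod_two_pow_eq_two_pow_sub_one_iff {d m : ℕ} :
    d % 2 ^ m = 2 ^ m - 1 ↔ ∀ j < m, d.testBit j = true := by
  rw [mod_two_pow_eq_iff_testBit (sub_one_lt (Nat.two_pow_pos m).ne')]
  simp +contextual

theorem exists_mod_eq_of_lt {p r : ℕ} (hr : r < p) (D : ℕ) :
    ∃ d, D ≤ d ∧ d < D + p ∧ d % p = r := by
  obtain ⟨k, hk⟩ : ∃ k, D ≤ p * k + r ∧ p * k + r < D + p := by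
    have hD := div_add_mod D p
    have hlt := mod_lt D (r.zero_le.trans_lt hr)
    by_cases h : D % p ≤ r
    · exact ⟨D / p, by omega, by omega⟩
    · exact ⟨D / p + 1, by rw [mul_add]; omega, by rw [mul_add]; omega⟩
  exact ⟨p * k + r, hk.1, hk.2, by rw [mul_add_mod, mod_eq_of_lt hr]⟩

end Nat

theorem le_leastZeroBit_iff {d k : ℕ} :
    k ≤ leastZeroBit d ↔ ∀ j < k, d.testBit j = true := by
  simp only [leastZeroBit, Nat.le_find_iff, Bool.not_eq_false]

theorem leastZeroBit_eq_iff {d k : ℕ} : leastZeroBit d = k ↔ d % 2 ^ (k + 1) = 2 ^ k - 1 := by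
  rw [Nat.mod_two_pow_eq_iff_testBit
    ((Nat.sub_one_lt (Nat.two_pow_pos k).ne').trans (Nat.pow_lt_pow_succ one_lt_two))]
  simp only [leastZeroBit, Nat.find_eq_iff, Bool.not_eq_false, Nat.testBit_two_pow_sub_one,
    Nat.lt_succ_iff_lt_or_eq, or_imp, forall_and, forall_eq, lt_irrefl, decide_false]
  simp +contextual [and_comm]

theorem regSched_eq_iff {n i : ℕ} (hi : 1 ≤ i) (hin : i ≤ n) (d : ℕ) :
    regSched n d = i ↔ d % 2 ^ min i (n - 1) = 2 ^ (i - 1) - 1 := by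
  rcases hin.lt_or_eq with hlt | rfl
  · obtain ⟨k, rfl⟩ : ∃ k, i = k + 1 := ⟨i - 1, by omega⟩
    rw [min_eq_left (by omega), Nat.add_sub_cancel, ← leastZeroBit_eq_iff, regSched]
    omega
  · rw [min_eq_right (Nat.sub_le i 1), Nat.mod_two_pow_eq_two_pow_sub_one_iff,
      ← le_leastZeroBit_iff, regSched]
    omega

theorem exists_regSched_eq {n i : ℕ} (hi : 1 ≤ i) (hin : i ≤ n) (D : ℕ) :
    ∃ d, D ≤ d ∧ d < D + 2 ^ min i (n - 1) ∧ regSched n d = i := by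
  have hres : 2 ^ (i - 1) - 1 < 2 ^ min i (n - 1) :=
    (Nat.sub_one_lt (Nat.two_pow_pos _).ne').trans_le
      (Nat.pow_le_pow_right two_pos (by omega))
  simpa only [regSched_eq_iff hi hin] using Nat.exists_mod_eq_of_lt hres D

section BambooHeight

variable {cut : ℕ → Prop} [DecidablePred cut] {b : ℕ → ℝ} {h : ℝ}

theorem bamboo_height_add_le (hh : 0 ≤ h)
    (hbs : ∀ D, b (D + 1) = (if cut D then 0 else b D) + h) {D : ℕ} (hD : b D ≤ h) (k : ℕ) :
    b (D + k) ≤ (k + 1) * h := by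
  induction k with
  | zero => simpa using hD
  | succ k ih =>
    rw [← add_assoc, hbs]
    push_cast
    split_ifs <;> nlinarith

theorem bamboo_height_le_of_forall_exists_cut (hh : 0 ≤ h) (hb0 : b 0 = h)
    (hbs : ∀ D, b (D + 1) = (if cut D then 0 else b D) + h) {p : ℕ}
    (hwin : ∀ D, ∃ d, D ≤ d ∧ d < D + p ∧ cut d) (D : ℕ) :
    b D ≤ p * h := by
  by_cases hDp : D < p
  · calc b D = b (0 + D) := by rw [zero_add]
      _ ≤ (D + 1) * h := bamboo_height_add_le hh hbs hb0.le D
      _ ≤ p * h := by gcongr; exact_mod_cast hDp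
  · obtain ⟨c, hc1, hc2, hc⟩ := hwin (D - p)
    have hbc : b (c + 1) ≤ h := by simp [hbs, hc]
    calc b D = b (c + 1 + (D - c - 1)) := by congr 1; omega
      _ ≤ ((D - c - 1 : ℕ) + 1) * h := bamboo_height_add_le hh hbs hbc _
      _ ≤ p * h := by gcongr; exact_mod_cast (by omega : D - c - 1 + 1 ≤ p)

theorem bamboo_height_eq_of_forall_lt_not_cut (hb0 : b 0 = h)
    (hbs : ∀ D, b (D + 1) = (if cut D then 0 else b D) + h) {D : ℕ}
    (hnc : ∀ d < D, ¬ cut d) : b D = (D + 1) * h := by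
  induction D with
  | zero => simp [hb0]
  | succ D ih =>
    rw [hbs, if_neg (hnc D D.lt_succ_self), ih fun d hd => hnc d (hd.trans D.lt_succ_self)]
    push_cast
    ring

end BambooHeight

/-- For the regular instance `hᵢ = 2⁻ⁱ` (`1 ≤ i < n`), `hₙ = 2^{-(n-1)}` (encoded as
`hgt i = (1/2)^(min i (n-1))`), with heights `B D i` at the end of day `D` just before the
cut of day `D` (cuts happen at the end of each day `D = 0, 1, 2, …`): every bamboo `i < n`
is cut in every window of `2^i` consecutive days, bamboo `n` is cut in every window of
`2^{n-1}` consecutive days, and the makespan is exactly `1`. -/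
theorem regular_schedule_makespan (n : ℕ) (hn : 2 ≤ n)
    (hgt : ℕ → ℝ) (hgt_def : ∀ i, hgt i = ((1 : ℝ) / 2) ^ min i (n - 1))
    (B : ℕ → ℕ → ℝ)
    (hB0 : ∀ i, B 0 i = hgt i)
    (hBs : ∀ D i, B (D + 1) i = (if regSched n D = i then 0 else B D i) + hgt i) :
    (∀ i, 1 ≤ i → i < n → ∀ D : ℕ, ∃ d, D ≤ d ∧ d < D + 2 ^ i ∧ regSched n d = i) ∧
    (∀ D : ℕ, ∃ d, D ≤ d ∧ d < D + 2 ^ (n - 1) ∧ regSched n d = n) ∧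
    (∀ D i, 1 ≤ i → i ≤ n → B D i ≤ 1) ∧
    (∃ D i, 1 ≤ i ∧ i ≤ n ∧ B D i = 1) := by
  have hgt_nonneg (i : ℕ) : 0 ≤ hgt i := by rw [hgt_def]; positivity
  have hperiod_mul_hgt (i : ℕ) : (2 : ℝ) ^ min i (n - 1) * hgt i = 1 := by
    rw [hgt_def, ← mul_pow]; norm_num
  refine ⟨fun i hi hin D => ?_, fun D => ?_, fun D i hi hin => ?_,
    ⟨2 ^ (n - 1) - 1, n, (by omega : 1 ≤ n), le_rfl, ?_⟩⟩
  · simpa only [min_eq_left (by omega : i ≤ n - 1)] using exists_regSched_eq hi hin.le D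
  · simpa only [min_eq_right (Nat.sub_le n 1)] using
      exists_regSched_eq (by omega : 1 ≤ n) le_rfl D
  · simpa [hperiod_mul_hgt] using bamboo_height_le_of_forall_exists_cut (b := (B · i))
      (hgt_nonneg i) (hB0 i) (hBs · i) (exists_regSched_eq hi hin) D
  · have hnc : ∀ d < 2 ^ (n - 1) - 1, regSched n d ≠ n := fun d hd => by
      rw [Ne, regSched_eq_iff (by omega) le_rfl, min_eq_right (Nat.sub_le n 1),
        Nat.mod_eq_of_lt (by omega)]
      exact hd.ne
    rw [bamboo_height_eq_of_forall_lt_not_cut (b := (B · n)) (hB0 n) (hBs · n) hnc]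
    simpa [Nat.sub_add_cancel Nat.one_le_two_pow, min_eq_right (Nat.sub_le n 1)] using
      hperiod_mul_hgt n
end
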